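/- arXiv:0810.2945 — 2 statements merged into one kernel-verified Lean document; each statement's English description precedes it below -/
import Mathlib

section
/- Let V be a finite-dimensional vector space over ℚ with a nondegenerate symmetric bilinear form ⟨·,·⟩ and let δ ∈ V be a nonzero isotropic vector, i.e., δ ≠ 0 and ⟨δ,δ⟩ = 0. If f is an isometry of V that restricts to the identity on the orthogonal complement δ^⊥, then f = id. (Thus an isometry defined on the complement of an isotropic vector has at most one extension to V.) -/
/-!
For every `x`, the vector `f x - x` is orthogonal to `δ^⊥`, because `f` preserves `B` and fixes
`δ^⊥` pointwise; by nondegeneracy it is then a multiple `c • δ`. As `δ` is isotropic,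
`B (x + c • δ) (x + c • δ) = B x x + 2 c B x δ`, so preservation of `B x x` forces `c = 0` or
`x ∈ δ^⊥`, and in both cases `f x = x`.
-/

open LinearMap (ker)

theorem LinearMap.exists_eq_smul_of_ker_le {K E : Type*} [Field K] [AddCommGroup E] [Module K E]
    {φ ψ : E →ₗ[K] K} (h : ker φ ≤ ker ψ) : ∃ c : K, ψ = c • φ := by
  have hψ := mem_span_of_iInf_ker_le_ker (L := fun _ : Unit ↦ φ) (by simpa using h)
  rw [Set.range_const] at hψ
  obtain ⟨c, hc⟩ := Submodule.mem_span_singleton.1 hψ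
  exact ⟨c, hc.symm⟩

theorem LinearMap.SeparatingLeft.exists_eq_smul_of_ker_le {K V : Type*} [Field K]
    [AddCommGroup V] [Module K V] {B : LinearMap.BilinForm K V} (hB : B.SeparatingLeft)
    {δ w : V} (h : ker (B δ) ≤ ker (B w)) : ∃ c : K, w = c • δ := by
  obtain ⟨c, hc⟩ := LinearMap.exists_eq_smul_of_ker_le h
  refine ⟨c, sub_eq_zero.1 (hB _ fun y ↦ ?_)⟩
  simpa [sub_eq_zero] using LinearMap.congr_fun hc y

namespace LinearMap.BilinForm

variable {R V : Type*} [CommRing R] [AddCommGroup V] [Module R V] {B : LinearMap.BilinForm R V}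

theorem ker_le_ker_apply_sub_self {f : V →ₗ[R] V} (hf : ∀ x y, B (f x) (f y) = B x y) {δ : V}
    (hfix : ∀ y, B δ y = 0 → f y = y) (x : V) : ker (B δ) ≤ ker (B (f x - x)) := by
  intro y hy
  have hfy : f y = y := hfix y hy
  simp [← hf x y, hfy]

theorem IsSymm.apply_add_smul_self_of_isotropic (hB : B.IsSymm) {δ : V} (hδ : B δ δ = 0)
    (x : V) (c : R) : B (x + c • δ) (x + c • δ) = B x x + 2 * c * B x δ := by
  simp only [map_add, map_smul, LinearMap.add_apply, LinearMap.smul_apply, smul_eq_mul, hδ,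
    hB.eq δ x]
  ring

end LinearMap.BilinForm

open LinearMap.BilinForm in
theorem isometry_fixing_isotropic_orthogonal_complement_general
    {V : Type*} [AddCommGroup V] [Module ℚ V]
    (B : LinearMap.BilinForm ℚ V) (hB : B.Nondegenerate)
    (hsymm : ∀ x y : V, B x y = B y x)
    (δ : V) (hδ : B δ δ = 0)
    (f : V ≃ₗ[ℚ] V) (hf : ∀ x y : V, B (f x) (f y) = B x y)
    (hfix : ∀ x : V, B x δ = 0 → f x = x) :
    ∀ x : V, f x = x := by
  intro x
  obtain ⟨c, hc⟩ := hB.1.exists_eq_smul_of_ker_le <|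
    ker_le_ker_apply_sub_self (f := f.toLinearMap) hf (fun y hy ↦ hfix y (hsymm y δ ▸ hy)) x
  have hfx : f x = x + c • δ := eq_add_of_sub_eq' hc
  have hnorm := hf x x
  rw [hfx, IsSymm.apply_add_smul_self_of_isotropic ⟨hsymm⟩ hδ, add_eq_left] at hnorm
  rcases mul_eq_zero.1 hnorm with hc0 | hxδ
  · rw [hfx, (mul_eq_zero.1 hc0).resolve_left two_ne_zero, zero_smul, add_zero]
  · exact hfix x hxδ

/-- Let `V` be a finite-dimensional vector space over `ℚ` with a
nondegenerate symmetric bilinear form `B` and let `δ ∈ V` be a nonzero isotropic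
vector (`δ ≠ 0`, `B δ δ = 0`). If `f` is an isometry of `V` that restricts to the
identity on `δ^⊥`, then `f = id`. -/
theorem isometry_fixing_isotropic_orthogonal_complement
    {V : Type*} [AddCommGroup V] [Module ℚ V] [FiniteDimensional ℚ V]
    (B : LinearMap.BilinForm ℚ V) (hB : B.Nondegenerate)
    (hsymm : ∀ x y : V, B x y = B y x)
    (δ : V) (hδ0 : δ ≠ 0) (hδ : B δ δ = 0)
    (f : V ≃ₗ[ℚ] V) (hf : ∀ x y : V, B (f x) (f y) = B x y)
    (hfix : ∀ x : V, B x δ = 0 → f x = x) :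
    ∀ x : V, f x = x :=
  isometry_fixing_isotropic_orthogonal_complement_general B hB hsymm δ hδ f hf hfix
end

section
/- Let L be a hyperbolic lattice of rank 2 that contains a nonzero isotropic element, i.e., some x ∈ L with x ≠ 0 and x² = 0. Then the group O(L) is finite. -/
/-!
Nondegeneracy gives `y` with `x₀ · y ≠ 0`, and then `e = 2 (x₀ · y) y - y² x₀` is isotropic with
`c = x₀ · e ≠ 0`. In rank two, anything orthogonal to both `x₀` and `e` vanishes (it would
otherwise be a third independent vector), whence
`c u = (e · u) x₀ + (x₀ · u) e` for all `u` and `c (u · v) = (e · u)(x₀ · v) + (x₀ · u)(e · v)`.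
An isometry `f` is determined by `f x₀` and `f e`, which are isotropic with `f x₀ · f e = c`.
By the identity, each isotropic vector has a vanishing coordinate `x₀ · u` or `e · u`, and then
`c² = (e · f x₀)(x₀ · f e) + (x₀ · f x₀)(e · f e)` bounds the other coordinates by `c²`, leaving
finitely many possibilities for `f`.
-/

/-- A nondegenerate symmetric bilinear form `B` on a lattice `L` is *hyperbolic*
(of signature `(1, n−1)` on `L ⊗ ℝ`) iff there is `v ∈ L` with `v² > 0` such that
`B` is negative definite on the orthogonal complement of `v` in `L`. -/
def IsHyperbolicLat {L : Type*} [AddCommGroup L] [Module ℤ L]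
    (B : L →ₗ[ℤ] L →ₗ[ℤ] ℤ) : Prop :=
  ∃ v : L, 0 < B v v ∧ ∀ x : L, B v x = 0 → x ≠ 0 → B x x < 0

open Module

theorem abs_le_abs_of_mul_eq_zero {a b c d n : ℤ} (hab : a * b = 0) (hn : n = a * c + b * d)
    (hn0 : n ≠ 0) : |a| ≤ |n| := by
  rcases mul_eq_zero.1 hab with rfl | rfl
  · simp
  · exact Int.le_abs_of_dvd hn0 ((abs_dvd _ _).2 ⟨c, by simpa using hn⟩)

namespace LinearMap

variable {L : Type*} [AddCommGroup L] [Module ℤ L] {B : L →ₗ[ℤ] L →ₗ[ℤ] ℤ}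

structure IsIsotropicPair (B : L →ₗ[ℤ] L →ₗ[ℤ] ℤ) (x e : L) : Prop where
  left : B x x = 0
  right : B e e = 0
  apply_ne_zero : B x e ≠ 0

theorem SeparatingLeft.smul_right_injective (hB : B.SeparatingLeft) {n : ℤ} (hn : n ≠ 0) :
    Function.Injective fun u : L => n • u := by
  intro u v huv
  rw [← sub_eq_zero]
  refine hB _ fun z => ?_
  have h := congrArg (B · z) huv
  simp only [map_zsmul, smul_apply, smul_eq_mul] at h
  rw [map_sub, sub_apply, mul_left_cancel₀ hn h, sub_self]

namespace IsSymm

theorem exists_isIsotropicPair (hsymm : B.IsSymm) (hB : B.SeparatingLeft) {x : L}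
    (hx0 : x ≠ 0) (hx : B x x = 0) : ∃ e, B.IsIsotropicPair x e := by
  obtain ⟨y, hy⟩ : ∃ y, B x y ≠ 0 := by
    by_contra! h
    exact hx0 (hB x h)
  have hyx : B y x = B x y := (hsymm.eq x y).symm
  refine ⟨(2 * B x y) • y - B y y • x, hx, ?_, ?_⟩
  · simp only [map_sub, map_zsmul, sub_apply, smul_apply, smul_eq_mul, hx, hyx]
    ring
  · simp only [map_sub, map_zsmul, smul_eq_mul, hx]
    simpa using hy

variable [Module.Finite ℤ L] {x e : L}

theorem eq_zero_of_apply_eq_zero (hsymm : B.IsSymm) (hB : B.SeparatingLeft)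
    (hrank : finrank ℤ L ≤ 2) (h : B.IsIsotropicPair x e) {w : L} (hxw : B x w = 0)
    (hew : B e w = 0) : w = 0 := by
  by_contra hw
  suffices LinearIndependent ℤ ![w, x, e] by
    simpa using this.fintype_card_le_finrank.trans hrank
  have hex : B e x ≠ 0 := by rw [← hsymm.eq x e]; exact h.apply_ne_zero
  rw [Fintype.linearIndependent_iff]
  intro g hg
  simp only [Fin.sum_univ_three, Matrix.cons_val_zero, Matrix.cons_val_one, Matrix.cons_val_two,
    Matrix.head_cons, Matrix.tail_cons] at hg
  have h1 : g 1 = 0 := by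
    simpa [hew, h.right, hex] using congrArg (B e) hg
  have h2 : g 2 = 0 := by
    simpa [hxw, h1, h.apply_ne_zero] using congrArg (B x) hg
  have h0 : g 0 = 0 := by
    by_contra h0
    refine hw (hB w fun z => ?_)
    simpa [h1, h2, h0] using congrArg (B · z) hg
  intro i
  fin_cases i <;> assumption

theorem smul_eq_apply_smul_add_apply_smul (hsymm : B.IsSymm) (hB : B.SeparatingLeft)
    (hrank : finrank ℤ L ≤ 2) (h : B.IsIsotropicPair x e) (u : L) :
    B x e • u = B e u • x + B x u • e := by
  have hex : B e x = B x e := (hsymm.eq x e).symm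
  symm
  rw [← sub_eq_zero]
  refine hsymm.eq_zero_of_apply_eq_zero hB hrank h ?_ ?_
  · simp only [map_sub, map_add, map_zsmul, smul_eq_mul, h.left]
    ring
  · simp only [map_sub, map_add, map_zsmul, smul_eq_mul, h.right, hex]
    ring

theorem mul_apply_eq (hsymm : B.IsSymm) (hB : B.SeparatingLeft) (hrank : finrank ℤ L ≤ 2)
    (h : B.IsIsotropicPair x e) (u v : L) :
    B x e * B u v = B e u * B x v + B x u * B e v := by
  simpa using congrArg (B · v) (hsymm.smul_eq_apply_smul_add_apply_smul hB hrank h u)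

theorem apply_mul_apply_eq_zero_of_isotropic (hsymm : B.IsSymm) (hB : B.SeparatingLeft)
    (hrank : finrank ℤ L ≤ 2) (h : B.IsIsotropicPair x e) {u : L} (hu : B u u = 0) :
    B x u * B e u = 0 := by
  have huu := hsymm.mul_apply_eq hB hrank h u u
  rw [hu, mul_zero] at huu
  linarith

theorem abs_apply_le_sq_of_isotropic (hsymm : B.IsSymm) (hB : B.SeparatingLeft)
    (hrank : finrank ℤ L ≤ 2) (h : B.IsIsotropicPair x e) {u v : L} (hu : B u u = 0)
    (huv : B u v = B x e) : |B x u| ≤ B x e ^ 2 ∧ |B e u| ≤ B x e ^ 2 := by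
  have hprod := hsymm.apply_mul_apply_eq_zero_of_isotropic hB hrank h hu
  have hsum : B x e ^ 2 = B e u * B x v + B x u * B e v := by
    rw [sq, ← hsymm.mul_apply_eq hB hrank h, huv]
  have hsq : B x e ^ 2 ≠ 0 := pow_ne_zero 2 h.apply_ne_zero
  rw [← abs_of_nonneg (sq_nonneg (B x e))]
  exact ⟨abs_le_abs_of_mul_eq_zero hprod (c := B e v) (d := B x v) (by rw [hsum]; ring) hsq,
    abs_le_abs_of_mul_eq_zero (by rw [mul_comm, hprod]) hsum hsq⟩

theorem finite_setOf_abs_apply_le (hsymm : B.IsSymm) (hB : B.SeparatingLeft)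
    (hrank : finrank ℤ L ≤ 2) (h : B.IsIsotropicPair x e) (m : ℤ) :
    {u : L | |B x u| ≤ m ∧ |B e u| ≤ m}.Finite := by
  have hinj : Function.Injective fun u => (B x u, B e u) := by
    intro u v huv
    obtain ⟨hxu, heu⟩ := Prod.mk_inj.1 huv
    apply hB.smul_right_injective h.apply_ne_zero
    simp only [hsymm.smul_eq_apply_smul_add_apply_smul hB hrank h]
    rw [hxu, heu]
  refine (((Set.finite_Icc (-m) m).prod (Set.finite_Icc (-m) m)).preimage hinj.injOn).subset ?_
  exact fun u hu => ⟨abs_le.1 hu.1, abs_le.1 hu.2⟩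

theorem ext_of_isIsotropicPair (hsymm : B.IsSymm) (hB : B.SeparatingLeft) (hrank : finrank ℤ L ≤ 2)
    (h : B.IsIsotropicPair x e) {f g : L →ₗ[ℤ] L} (hfx : f x = g x) (hfe : f e = g e) :
    f = g := by
  ext u
  apply hB.smul_right_injective h.apply_ne_zero
  dsimp only
  rw [← map_zsmul, ← map_zsmul, hsymm.smul_eq_apply_smul_add_apply_smul hB hrank h u]
  simp only [map_add, map_zsmul, hfx, hfe]

end IsSymm

end LinearMap

theorem rank_two_isotropic_finite_orthogonal_group_general
    {L : Type*} [AddCommGroup L] [Module ℤ L] [Module.Finite ℤ L]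
    (B : L →ₗ[ℤ] L →ₗ[ℤ] ℤ)
    (hnd : ∀ x : L, (∀ y : L, B x y = 0) → x = 0)
    (hsymm : ∀ x y : L, B x y = B y x)
    (hrank : Module.finrank ℤ L = 2)
    (x₀ : L) (hx₀ : x₀ ≠ 0) (hiso : B x₀ x₀ = 0) :
    {f : L ≃ₗ[ℤ] L | ∀ x y : L, B (f x) (f y) = B x y}.Finite := by
  have hB : B.IsSymm := ⟨hsymm⟩
  obtain ⟨e, he⟩ := hB.exists_isIsotropicPair hnd hx₀ hiso
  have hT := hB.finite_setOf_abs_apply_le hnd hrank.le he (B x₀ e ^ 2)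
  have hinj : Function.Injective fun f : L ≃ₗ[ℤ] L => (f x₀, f e) := fun f g hfg =>
    LinearEquiv.toLinearMap_injective <|
      hB.ext_of_isIsotropicPair hnd hrank.le he (Prod.mk_inj.1 hfg).1 (Prod.mk_inj.1 hfg).2
  refine ((hT.prod hT).preimage hinj.injOn).subset fun f hf => ?_
  have hfx₀ : B (f x₀) (f x₀) = 0 := (hf x₀ x₀).trans hiso
  have hfe : B (f e) (f e) = 0 := (hf e e).trans he.right
  exact ⟨hB.abs_apply_le_sq_of_isotropic hnd hrank.le he hfx₀ (hf x₀ e),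
    hB.abs_apply_le_sq_of_isotropic hnd hrank.le he hfe ((hf e x₀).trans (hsymm e x₀))⟩

/-- Let `L` be a hyperbolic lattice of rank 2 that contains a
nonzero isotropic element, i.e. some `x ∈ L` with `x ≠ 0` and `x² = 0`. Then the
group `O(L)` of automorphisms of `L` preserving the form is finite. -/
theorem rank_two_isotropic_finite_orthogonal_group
    {L : Type*} [AddCommGroup L] [Module ℤ L] [Module.Free ℤ L] [Module.Finite ℤ L]
    (B : L →ₗ[ℤ] L →ₗ[ℤ] ℤ)
    (hnd : ∀ x : L, (∀ y : L, B x y = 0) → x = 0)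
    (hsymm : ∀ x y : L, B x y = B y x)
    (hrank : Module.finrank ℤ L = 2)
    (hhyp : IsHyperbolicLat B)
    (x₀ : L) (hx₀ : x₀ ≠ 0) (hiso : B x₀ x₀ = 0) :
    {f : L ≃ₗ[ℤ] L | ∀ x y : L, B (f x) (f y) = B x y}.Finite :=
  rank_two_isotropic_finite_orthogonal_group_general B hnd hsymm hrank x₀ hx₀ hiso
end
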